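/- Let X : [0,L] → ℝ^d be a piecewise continuously differentiable path with X(0) = 0 and let p : ℝ^d → ℝ^m be a polynomial map with p(0) = 0. Then for every w ∈ T(ℝ^m), ⟨σ(p(X)), w⟩ = ⟨σ(X), M_p(w)⟩, where p(X) denotes the path t ↦ p(X(t)). Equivalently, σ(p(X)) = M_p^*(σ(X)). -/

import Mathlib

/-!
The coefficient `⟨σ(X|[0,t]), w∘i⟩` is `∫₀ᵗ ⟨σ(X|[0,r]), w⟩ dX^i_r`. Integration by parts, together
with the last-letter recursion of `⧢`, makes `x ↦ ⟨σ(X|[0,t]), x⟩` a character of the shuffle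
algebra (Ree); as `X 0 = 0` it sends the letter `j` to `X^j_t`, hence `φ_d(f)` to `f(X_t)`. By the
chain rule `d p_i(X) = Σ_j ∂_j p_i(X) dX^j`, so the recursion for `⟨σ(p(X)), w∘i⟩` turns into the
recursion defining `M_p(w∘i)`, and induction on `w` concludes.
-/

noncomputable section

open MeasureTheory

/-- Words in the alphabet `{1,…,d}`. -/
abbrev Word (d : ℕ) := List (Fin d)

/-- `T(ℝ^d)`: the real vector space with basis the words in `{1,…,d}`. -/
abbrev Tens (d : ℕ) := Word d →₀ ℝ

namespace SigPaper

variable {d m s : ℕ}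

/-- The basis word `w` as an element of `T(ℝ^d)`. -/
def wordT (w : Word d) : Tens d := Finsupp.single w 1

/-- The shuffle product of two words. -/
def shuffleWord : Word d → Word d → Tens d
  | [], v => Finsupp.single v 1
  | u, [] => Finsupp.single u 1
  | a :: u, b :: v =>
      Finsupp.mapDomain (fun w => a :: w) (shuffleWord u (b :: v)) +
      Finsupp.mapDomain (fun w => b :: w) (shuffleWord (a :: u) v)
  termination_by u v => u.length + v.length
  decreasing_by all_goals simp +arith +decide

/-- The shuffle product `⧢` on `T(ℝ^d)`, the bilinear extension of the shuffle of words. -/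
def shuffle (x y : Tens d) : Tens d :=
  x.sum fun u a => y.sum fun v b => (a * b) • shuffleWord u v

/-- The operator appending the letter `i` at the end of every word (`T_i^+`). -/
def appendLetter (i : Fin d) (x : Tens d) : Tens d :=
  Finsupp.mapDomain (fun w => w ++ [i]) x

/-- The right half-shuffle of two words: `w ≻ (v∘i) = (w ⧢ v)∘i` (zero if the right word
is empty). -/
def halfShuffleWord (u v : Word d) : Tens d :=
  match v.getLast? with
  | none => 0
  | some i => appendLetter i (shuffleWord u v.dropLast)

/-- The right half-shuffle `≻`, extended bilinearly. -/
def halfShuffle (x y : Tens d) : Tens d :=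
  x.sum fun u a => y.sum fun v b => (a * b) • halfShuffleWord u v

/-- The letter-appending operator `T_i^+`. -/
def Tplus (i : Fin d) : Tens d → Tens d := appendLetter i

/-- `T_i^-` on a word: removes the last letter if it equals `i`, otherwise `0`. -/
def TminusWord (i : Fin d) (w : Word d) : Tens d :=
  match w.getLast? with
  | none => 0
  | some j => if j = i then Finsupp.single w.dropLast 1 else 0

/-- The letter-removing operator `T_i^-`. -/
def Tminus (i : Fin d) (x : Tens d) : Tens d := x.sum fun w a => a • TminusWord i w

/-- The single-letter word `i` in `T(ℝ^d)`. -/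
def letterT (i : Fin d) : Tens d := Finsupp.single [i] 1

/-- Shuffle powers `x^{⧢ n}`. -/
def shufflePow (x : Tens d) : ℕ → Tens d
  | 0 => Finsupp.single [] 1
  | n + 1 => shuffle (shufflePow x n) x

/-- Shuffle product of a list of elements. -/
def shuffleList : List (Tens d) → Tens d
  | [] => Finsupp.single [] 1
  | x :: xs => shuffle x (shuffleList xs)

/-- Image of the monomial `x^t` under `φ_d`: the shuffle product of its letters. -/
def phiMon (t : Fin d →₀ ℕ) : Tens d :=
  shuffleList ((List.finRange d).map fun i => shufflePow (letterT i) (t i))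

/-- The embedding `φ_d : ℝ[x₁,…,x_d] → (T(ℝ^d), ⧢)` sending the monomial
`x_{i₁}⋯x_{i_l}` to `i₁ ⧢ ⋯ ⧢ i_l`. -/
def phi (f : MvPolynomial (Fin d) ℝ) : Tens d :=
  f.support.sum fun t => f.coeff t • phiMon t

/-- A polynomial map `p : ℝ^d → ℝ^m`, given by `m` polynomials in `d` variables. -/
abbrev PolyMap (d m : ℕ) := Fin m → MvPolynomial (Fin d) ℝ

/-- `k_p^{ij} = φ_d(∂p_i/∂x_j) ∈ T(ℝ^d)`. -/
def kP (p : PolyMap d m) (i : Fin m) (j : Fin d) : Tens d :=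
  phi (MvPolynomial.pderiv j (p i))

/-- Auxiliary: `M_p` on reversed words, so that `M_p(e) = e` and
`M_p(w∘i) = Σ_j (M_p(w) ⧢ k_p^{ij})∘j`. -/
def MpRev (p : PolyMap d m) : List (Fin m) → Tens d
  | [] => Finsupp.single [] 1
  | i :: w => ∑ j : Fin d, appendLetter j (shuffle (MpRev p w) (kP p i j))

/-- `M_p` on a word. -/
def MpWord (p : PolyMap d m) (w : Word m) : Tens d := MpRev p w.reverse

/-- The linear map `M_p : T(ℝ^m) → T(ℝ^d)`. -/
def Mp (p : PolyMap d m) (x : Tens m) : Tens d := x.sum fun w a => a • MpWord p w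

/-- `X : [0,L] → ℝ^d` is piecewise continuously differentiable: there is a partition
`0 = t₀ ≤ t₁ ≤ ⋯ ≤ t_n = L` such that `X` is `C¹` on each subinterval. -/
def PiecewiseC1 (X : ℝ → Fin d → ℝ) (L : ℝ) : Prop :=
  ∃ (n : ℕ) (t : Fin (n + 1) → ℝ), Monotone t ∧ t 0 = 0 ∧ t (Fin.last n) = L ∧
    ∀ k : Fin n, ContDiffOn ℝ 1 X (Set.Icc (t k.castSucc) (t k.succ))

/-- Iterated-integral signature coefficients, on reversed words:
`⟨σ(X|_{[0,t]}), w∘i⟩ = ∫_0^t ⟨σ(X|_{[0,r]}), w⟩ Ẋ^i_r dr`. -/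
def sigRev (X : ℝ → Fin d → ℝ) : List (Fin d) → ℝ → ℝ
  | [], _ => 1
  | i :: w, t => ∫ r in (0:ℝ)..t, sigRev X w r * deriv (fun u => X u i) r

/-- `⟨σ(X|_{[0,L]}), w⟩`, the signature coefficient of the word `w`. -/
def sigWord (X : ℝ → Fin d → ℝ) (L : ℝ) (w : Word d) : ℝ := sigRev X w.reverse L

/-- The pairing `⟨σ(X|_{[0,L]}), x⟩` for `x ∈ T(ℝ^d)`. -/
def sigT (X : ℝ → Fin d → ℝ) (L : ℝ) (x : Tens d) : ℝ :=
  x.sum fun w a => a * sigWord X L w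

/-- The transformed path `p(X) : t ↦ p(X(t))`. -/
def pPath (p : PolyMap d m) (X : ℝ → Fin d → ℝ) : ℝ → Fin m → ℝ :=
  fun t i => MvPolynomial.eval (X t) (p i)

/-- The translated polynomial map `p̃(y) = p(y + x₀) − p(x₀)`, satisfying `p̃(0) = 0`. -/
def ptilde (p : PolyMap d m) (x0 : Fin d → ℝ) : PolyMap d m := fun i =>
  MvPolynomial.aeval (fun j => MvPolynomial.X j + MvPolynomial.C (x0 j)) (p i) -
    MvPolynomial.C (MvPolynomial.eval x0 (p i))

/-- The pairing `⟨exp_∘(L·𝟙), x⟩` for `x ∈ T(ℝ¹)`: the coefficient of the word of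
length `n` in `exp_∘(L·𝟙)` is `Lⁿ/n!`. -/
def expPair (L : ℝ) (x : Tens 1) : ℝ :=
  x.sum fun w a => a * (L ^ w.length / (w.length.factorial : ℝ))

/-- The pairing `⟨σ(X) ∘ σ(Y), x⟩` of the concatenation product of two signatures with
`x ∈ T(ℝ^d)`: on a word `w` it is `Σ_{u∘v = w} ⟨σ(X), u⟩·⟨σ(Y), v⟩`. -/
def concatPair (X Y : ℝ → Fin d → ℝ) (L : ℝ) (x : Tens d) : ℝ :=
  x.sum fun w a =>
    a * ∑ k ∈ Finset.range (w.length + 1), sigWord X L (w.take k) * sigWord Y L (w.drop k)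


open Set

lemma shuffleWord_nil_left (v : Word d) : shuffleWord [] v = Finsupp.single v 1 :=
  shuffleWord.eq_1 v

lemma shuffleWord_nil_right (u : Word d) : shuffleWord u [] = Finsupp.single u 1 := by
  cases u with
  | nil => exact shuffleWord.eq_1 []
  | cons a u => exact shuffleWord.eq_2 _ (by simp)

lemma shuffleWord_cons_cons (a b : Fin d) (u v : Word d) :
    shuffleWord (a :: u) (b :: v) =
      Finsupp.mapDomain (a :: ·) (shuffleWord u (b :: v)) +
        Finsupp.mapDomain (b :: ·) (shuffleWord (a :: u) v) :=
  shuffleWord.eq_3 a u b v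

lemma appendLetter_single (i : Fin d) (w : Word d) (c : ℝ) :
    appendLetter i (Finsupp.single w c) = Finsupp.single (w ++ [i]) c :=
  Finsupp.mapDomain_single

lemma appendLetter_add (i : Fin d) (x y : Tens d) :
    appendLetter i (x + y) = appendLetter i x + appendLetter i y :=
  Finsupp.mapDomain_add

lemma mapDomain_cons_appendLetter (a i : Fin d) (x : Tens d) :
    Finsupp.mapDomain (a :: ·) (appendLetter i x) =
      appendLetter i (Finsupp.mapDomain (a :: ·) x) := by
  simp only [appendLetter, ← Finsupp.mapDomain_comp]
  rfl

/-- `shuffleWord` recurses on first letters; this is the last-letter recursion by which the paper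
defines `⧢`. -/
lemma shuffleWord_append_append (u v : Word d) (a b : Fin d) :
    shuffleWord (u ++ [a]) (v ++ [b]) =
      appendLetter a (shuffleWord u (v ++ [b])) + appendLetter b (shuffleWord (u ++ [a]) v) := by
  induction u generalizing v with
  | nil =>
    induction v with
    | nil => simp [shuffleWord_cons_cons, shuffleWord_nil_left, shuffleWord_nil_right,
        appendLetter_single, add_comm]
    | cons c v ih =>
      simp only [List.nil_append, List.cons_append] at ih ⊢
      rw [shuffleWord_cons_cons, ih, shuffleWord_cons_cons]
      simp only [shuffleWord_nil_left, Finsupp.mapDomain_add, Finsupp.mapDomain_single,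
        appendLetter_add, appendLetter_single, mapDomain_cons_appendLetter, List.cons_append]
      abel
  | cons c u ihu =>
    induction v with
    | nil =>
      have h := ihu []
      simp only [List.nil_append, List.cons_append] at h ⊢
      rw [shuffleWord_cons_cons, h, shuffleWord_cons_cons]
      simp only [shuffleWord_nil_right, Finsupp.mapDomain_add, Finsupp.mapDomain_single,
        appendLetter_add, appendLetter_single, mapDomain_cons_appendLetter, List.cons_append]
      abel
    | cons e v ihv =>
      have h := ihu (e :: v)
      simp only [List.cons_append] at h ihv ⊢
      rw [shuffleWord_cons_cons, h, ihv, shuffleWord_cons_cons, shuffleWord_cons_cons]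
      simp only [Finsupp.mapDomain_add, appendLetter_add, mapDomain_cons_appendLetter]
      abel

section Pairing

variable (X : ℝ → Fin d → ℝ) (t : ℝ)

@[simp] lemma sigWord_nil : sigWord X t [] = 1 := rfl

lemma sigWord_append_singleton (w : Word d) (i : Fin d) :
    sigWord X t (w ++ [i]) = ∫ r in (0 : ℝ)..t, sigWord X r w * deriv (fun u => X u i) r := by
  simp [sigWord, sigRev]

lemma sigT_eq_linearCombination (x : Tens d) :
    sigT X t x = Finsupp.linearCombination ℝ (sigWord X t) x := by
  simp [sigT, Finsupp.linearCombination_apply]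

@[simp] lemma sigT_single (w : Word d) (c : ℝ) :
    sigT X t (Finsupp.single w c) = c * sigWord X t w := by
  simp [sigT_eq_linearCombination]

@[simp] lemma sigT_add (x y : Tens d) : sigT X t (x + y) = sigT X t x + sigT X t y := by
  simp [sigT_eq_linearCombination]

@[simp] lemma sigT_smul (c : ℝ) (x : Tens d) : sigT X t (c • x) = c * sigT X t x := by
  simp [sigT_eq_linearCombination]

lemma sigT_sum {ι : Type*} (s : Finset ι) (f : ι → Tens d) :
    sigT X t (∑ i ∈ s, f i) = ∑ i ∈ s, sigT X t (f i) := by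
  simp [sigT_eq_linearCombination]

lemma sigT_finsuppSum {α M : Type*} [Zero M] (x : α →₀ M) (g : α → M → Tens d) :
    sigT X t (x.sum g) = x.sum fun a b => sigT X t (g a b) := by
  simp only [sigT_eq_linearCombination, map_finsuppSum]

end Pairing

lemma integral_mul_integral_eq_integral {f g : ℝ → ℝ} {a b : ℝ}
    (hf : IntervalIntegrable f volume a b) (hg : IntervalIntegrable g volume a b) :
    (∫ x in a..b, f x) * (∫ x in a..b, g x) =
      ∫ x in a..b, f x * (∫ y in a..x, g y) + (∫ y in a..x, f y) * g x := by
  have hF := hf.absolutelyContinuousOnInterval_intervalIntegral left_mem_uIcc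
  have hG := hg.absolutelyContinuousOnInterval_intervalIntegral left_mem_uIcc
  have key := hF.integral_deriv_mul_eq_sub hG
  simp only [intervalIntegral.integral_same, zero_mul, sub_zero] at key
  rw [← key]
  refine intervalIntegral.integral_congr_ae ?_
  filter_upwards [hf.ae_hasDerivAt_integral, hg.ae_hasDerivAt_integral] with x hfx hgx hx
  rw [(hfx (uIoc_subset_uIcc hx) a left_mem_uIcc).deriv,
    (hgx (uIoc_subset_uIcc hx) a left_mem_uIcc).deriv]

section Shuffle

variable {X : ℝ → Fin d → ℝ} {L t : ℝ}
  (hD : ∀ j, IntervalIntegrable (fun r => deriv (fun u => X u j) r) volume 0 L)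
include hD

lemma intervalIntegrable_mul_deriv {g : ℝ → ℝ} (hg : ContinuousOn g (uIcc 0 L)) (j : Fin d)
    (ht : t ∈ uIcc 0 L) :
    IntervalIntegrable (fun r => g r * deriv (fun u => X u j) r) volume 0 t :=
  ((hD j).continuousOn_mul hg).mono_set (uIcc_subset_uIcc left_mem_uIcc ht)

lemma continuousOn_sigWord (w : Word d) : ContinuousOn (fun t => sigWord X t w) (uIcc 0 L) := by
  induction w using List.reverseRecOn with
  | nil => exact continuousOn_const
  | append_singleton w i ih =>
    simp only [sigWord_append_singleton]
    exact intervalIntegral.continuousOn_primitive_interval' ((hD i).continuousOn_mul ih)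
      left_mem_uIcc

lemma continuousOn_sigT (x : Tens d) : ContinuousOn (fun t => sigT X t x) (uIcc 0 L) :=
  continuousOn_finsetSum _ fun w _ => continuousOn_const.mul (continuousOn_sigWord hD w)

lemma sigT_appendLetter (i : Fin d) (x : Tens d) (ht : t ∈ uIcc 0 L) :
    sigT X t (appendLetter i x) = ∫ r in (0 : ℝ)..t, sigT X r x * deriv (fun u => X u i) r := by
  induction x using Finsupp.induction_linear with
  | zero => simp [appendLetter, sigT]
  | add x y hx hy =>
    rw [appendLetter_add, sigT_add, hx, hy, ← intervalIntegral.integral_add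
      (intervalIntegrable_mul_deriv hD (continuousOn_sigT hD x) i ht)
      (intervalIntegrable_mul_deriv hD (continuousOn_sigT hD y) i ht)]
    simp only [sigT_add, add_mul]
  | single w c =>
    simp only [appendLetter_single, sigT_single, sigWord_append_singleton, mul_assoc,
      intervalIntegral.integral_const_mul]

lemma sigT_shuffleWord (u v : Word d) (ht : t ∈ uIcc 0 L) :
    sigT X t (shuffleWord u v) = sigWord X t u * sigWord X t v := by
  induction u using List.reverseRecOn generalizing v t with
  | nil => simp [shuffleWord_nil_left]
  | append_singleton u a ihu =>
    induction v using List.reverseRecOn generalizing t with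
    | nil => simp [shuffleWord_nil_right]
    | append_singleton v b ihv =>
      have hsub : uIcc 0 t ⊆ uIcc 0 L := uIcc_subset_uIcc left_mem_uIcc ht
      rw [shuffleWord_append_append, sigT_add, sigT_appendLetter hD _ _ ht,
        sigT_appendLetter hD _ _ ht, sigWord_append_singleton, sigWord_append_singleton,
        integral_mul_integral_eq_integral
          (intervalIntegrable_mul_deriv hD (continuousOn_sigWord hD u) a ht)
          (intervalIntegrable_mul_deriv hD (continuousOn_sigWord hD v) b ht),
        ← intervalIntegral.integral_add
          (intervalIntegrable_mul_deriv hD (continuousOn_sigT hD _) a ht)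
          (intervalIntegrable_mul_deriv hD (continuousOn_sigT hD _) b ht)]
      refine intervalIntegral.integral_congr fun r hr => ?_
      rw [ihu _ (hsub hr), ihv (hsub hr), sigWord_append_singleton, sigWord_append_singleton]
      ring

lemma sigT_shuffle (x y : Tens d) (ht : t ∈ uIcc 0 L) :
    sigT X t (shuffle x y) = sigT X t x * sigT X t y := by
  simp only [shuffle, sigT_finsuppSum, sigT_smul, sigT_shuffleWord hD _ _ ht]
  rw [sigT, sigT, Finsupp.sum_mul]
  simp only [Finsupp.mul_sum, mul_mul_mul_comm]

lemma sigT_shufflePow (x : Tens d) (n : ℕ) (ht : t ∈ uIcc 0 L) :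
    sigT X t (shufflePow x n) = sigT X t x ^ n := by
  induction n with
  | zero => simp [shufflePow]
  | succ n ih => rw [shufflePow, sigT_shuffle hD _ _ ht, ih, pow_succ]

lemma sigT_shuffleList (l : List (Tens d)) (ht : t ∈ uIcc 0 L) :
    sigT X t (shuffleList l) = (l.map fun y => sigT X t y).prod := by
  induction l with
  | nil => simp [shuffleList]
  | cons y l ih => rw [shuffleList, sigT_shuffle hD _ _ ht, ih, List.map_cons, List.prod_cons]

end Shuffle

open MvPolynomial in
lemma hasDerivAt_eval_comp {σ : Type*} [Fintype σ] {c : ℝ → σ → ℝ} {c' : σ → ℝ} {r : ℝ}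
    (hc : ∀ j, HasDerivAt (fun u => c u j) (c' j) r) (f : MvPolynomial σ ℝ) :
    HasDerivAt (fun u => eval (c u) f) (∑ j, eval (c r) (pderiv j f) * c' j) r := by
  classical
  induction f using MvPolynomial.induction_on with
  | C a => simpa using hasDerivAt_const r a
  | add f g hf hg => simpa [add_mul, Finset.sum_add_distrib] using hf.fun_add hg
  | mul_X f j hf =>
    simp only [map_mul, eval_X]
    refine (hf.fun_mul (hc j)).congr_deriv ?_
    have hterm : ∀ i, eval (c r) (pderiv i (f * X j)) * c' i =
        eval (c r) (pderiv i f) * c' i * c r j + if j = i then eval (c r) f * c' i else 0 := by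
      intro i
      by_cases h : j = i <;> simp [h, Derivation.leibniz, pderiv_X] <;> ring
    rw [Finset.sum_congr rfl fun i _ => hterm i, Finset.sum_add_distrib, Finset.sum_mul,
      Finset.sum_ite_eq, if_pos (Finset.mem_univ j)]

section PiecewiseC1

variable {X : ℝ → Fin d → ℝ} {L : ℝ}

lemma ContDiffOn.intervalIntegrable_deriv {f : ℝ → ℝ} {a b : ℝ} (hab : a ≤ b)
    (hf : ContDiffOn ℝ 1 f (Icc a b)) : IntervalIntegrable (deriv f) volume a b := by
  rcases hab.eq_or_lt with rfl | hab
  · exact IntervalIntegrable.refl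
  rw [intervalIntegrable_iff_integrableOn_Ioo_of_le hab.le]
  have hcont := hf.continuousOn_derivWithin (uniqueDiffOn_Icc hab) le_rfl
  exact (hcont.integrableOn_Icc.mono_set Ioo_subset_Icc_self).congr_fun
    (fun x hx => derivWithin_of_mem_nhds (Icc_mem_nhds hx.1 hx.2)) measurableSet_Ioo

lemma PiecewiseC1.induction (hX : PiecewiseC1 X L) {P : ℝ → Prop} (h0 : P 0)
    (hstep : ∀ a b, 0 ≤ a → a ≤ b → ContDiffOn ℝ 1 X (Icc a b) → P a → P b) : P L := by
  obtain ⟨n, t, ht, ht0, htL, hC⟩ := hX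
  have key : ∀ k, 0 ≤ t k ∧ P (t k) := by
    intro k
    induction k using Fin.induction with
    | zero => exact ⟨ht0.ge, ht0 ▸ h0⟩
    | succ k ih =>
      have hk := ht (Fin.castSucc_le_succ k)
      exact ⟨ih.1.trans hk, hstep _ _ ih.1 hk (hC k) ih.2⟩
  exact htL ▸ (key (Fin.last n)).2

lemma PiecewiseC1.nonneg (hX : PiecewiseC1 X L) : 0 ≤ L :=
  hX.induction le_rfl fun _ _ ha hab _ _ => ha.trans hab

lemma PiecewiseC1.continuousOn (hX : PiecewiseC1 X L) : ContinuousOn X (Icc 0 L) := by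
  refine hX.induction (P := fun s => ContinuousOn X (Icc 0 s)) (by simp) ?_
  intro a b ha hab hC h
  rw [← Icc_union_Icc_eq_Icc ha hab]
  exact h.union_of_isClosed hC.continuousOn isClosed_Icc isClosed_Icc

lemma PiecewiseC1.intervalIntegrable_deriv (hX : PiecewiseC1 X L) (j : Fin d) :
    IntervalIntegrable (fun r => deriv (fun u => X u j) r) volume 0 L :=
  hX.induction (P := fun s => IntervalIntegrable (deriv (fun u => X u j)) volume 0 s)
    IntervalIntegrable.refl fun _ _ _ hab hC h =>
      h.trans (ContDiffOn.intervalIntegrable_deriv hab (contDiffOn_pi.1 hC j))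

lemma PiecewiseC1.countable_not_differentiableAt (hX : PiecewiseC1 X L) :
    {x ∈ Icc 0 L | ¬DifferentiableAt ℝ X x}.Countable := by
  refine hX.induction (P := fun s => {x ∈ Icc 0 s | ¬DifferentiableAt ℝ X x}.Countable)
    ((countable_singleton 0).mono fun x hx => le_antisymm hx.1.2 hx.1.1) ?_
  intro a b ha hab hC h
  refine (h.union (countable_singleton b)).mono ?_
  rintro x ⟨hx, hnd⟩
  rcases le_or_gt x a with hxa | hxa
  · exact Or.inl ⟨⟨hx.1, hxa⟩, hnd⟩
  rcases hx.2.eq_or_lt with rfl | hxb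
  · exact Or.inr rfl
  · exact absurd (((hC.differentiableOn one_ne_zero) x ⟨hxa.le, hxb.le⟩).differentiableAt
      (Icc_mem_nhds hxa hxb)) hnd

lemma PiecewiseC1.ae_differentiableAt (hX : PiecewiseC1 X L) :
    ∀ᵐ x, x ∈ Icc 0 L → DifferentiableAt ℝ X x := by
  filter_upwards [hX.countable_not_differentiableAt.ae_notMem volume] with x hx hxL
  by_contra hnd
  exact hx ⟨hxL, hnd⟩

lemma PiecewiseC1.integral_deriv_eq_sub (hX : PiecewiseC1 X L) (j : Fin d) {t : ℝ}
    (ht : t ∈ Icc 0 L) : ∫ r in (0 : ℝ)..t, deriv (fun u => X u j) r = X t j - X 0 j := by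
  refine integral_eq_of_hasDerivAt_off_countable_of_le _ _ ht.1
    hX.countable_not_differentiableAt
    ((continuous_apply j).comp_continuousOn (hX.continuousOn.mono (Icc_subset_Icc_right ht.2)))
    (fun x hx => ?_)
    ((hX.intervalIntegrable_deriv j).mono_set (uIcc_subset_uIcc left_mem_uIcc
      (Icc_subset_uIcc ht)))
  have hdiff : DifferentiableAt ℝ X x := by
    by_contra hnd
    exact hx.2 ⟨⟨hx.1.1.le, hx.1.2.le.trans ht.2⟩, hnd⟩
  exact (differentiableAt_pi.1 hdiff j).hasDerivAt

end PiecewiseC1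

section Transform

variable {X : ℝ → Fin d → ℝ} {L t : ℝ}

lemma sigT_letterT (hX : PiecewiseC1 X L) (hX0 : X 0 = 0) (i : Fin d) (ht : t ∈ Icc 0 L) :
    sigT X t (letterT i) = X t i := by
  rw [letterT, sigT_single, one_mul, ← List.nil_append [i], sigWord_append_singleton]
  simp [hX.integral_deriv_eq_sub i ht, hX0]

lemma sigT_phi (hX : PiecewiseC1 X L) (hX0 : X 0 = 0) (f : MvPolynomial (Fin d) ℝ)
    (ht : t ∈ Icc 0 L) : sigT X t (phi f) = MvPolynomial.eval (X t) f := by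
  have hD := hX.intervalIntegrable_deriv
  have ht' := Icc_subset_uIcc ht
  rw [phi, sigT_sum, MvPolynomial.eval_eq']
  refine Finset.sum_congr rfl fun s _ => ?_
  rw [sigT_smul, phiMon, sigT_shuffleList hD _ ht', List.map_map, Fin.prod_univ_def]
  refine congrArg (_ * List.prod ·) (List.map_congr_left fun i _ => ?_)
  rw [Function.comp_apply, sigT_shufflePow hD _ _ ht', sigT_letterT hX hX0 i ht]

lemma MpWord_append_singleton (p : PolyMap d m) (w : Word m) (i : Fin m) :
    MpWord p (w ++ [i]) = ∑ j, appendLetter j (shuffle (MpWord p w) (kP p i j)) := by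
  simp [MpWord, MpRev]

lemma hasDerivAt_pPath (p : PolyMap d m) (i : Fin m) {r : ℝ} (hr : DifferentiableAt ℝ X r) :
    HasDerivAt (fun u => pPath p X u i)
      (∑ j, MvPolynomial.eval (X r) (MvPolynomial.pderiv j (p i)) * deriv (fun u => X u j) r) r :=
  hasDerivAt_eval_comp (fun j => (differentiableAt_pi.1 hr j).hasDerivAt) (p i)

lemma sigWord_pPath (hX : PiecewiseC1 X L) (hX0 : X 0 = 0) (p : PolyMap d m) (w : Word m)
    (ht : t ∈ Icc 0 L) : sigWord (pPath p X) t w = sigT X t (MpWord p w) := by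
  induction w using List.reverseRecOn generalizing t with
  | nil => simp [MpWord, MpRev]
  | append_singleton w i ih =>
    have hD := hX.intervalIntegrable_deriv
    have hsub : uIcc 0 t ⊆ Icc 0 L := by
      rw [uIcc_of_le ht.1]
      exact Icc_subset_Icc_right ht.2
    have hXc : ContinuousOn X (uIcc 0 L) := by
      rw [uIcc_of_le hX.nonneg]
      exact hX.continuousOn
    have chain : ∫ r in (0 : ℝ)..t, sigWord (pPath p X) r w * deriv (fun u => pPath p X u i) r
        = ∫ r in (0 : ℝ)..t, ∑ j, sigT X r (MpWord p w) *
            MvPolynomial.eval (X r) (MvPolynomial.pderiv j (p i)) * deriv (fun u => X u j) r := by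
      refine intervalIntegral.integral_congr_ae ?_
      filter_upwards [hX.ae_differentiableAt] with r hdiff hr
      have hrL := hsub (uIoc_subset_uIcc hr)
      rw [ih hrL, (hasDerivAt_pPath p i (hdiff hrL)).deriv, Finset.mul_sum]
      simp only [mul_assoc]
    have hint (j : Fin d) : IntervalIntegrable (fun r => sigT X r (MpWord p w) *
        MvPolynomial.eval (X r) (MvPolynomial.pderiv j (p i)) * deriv (fun u => X u j) r)
        volume 0 t :=
      intervalIntegrable_mul_deriv hD ((continuousOn_sigT hD _).mul
        ((MvPolynomial.continuous_eval _).comp_continuousOn hXc)) j (Icc_subset_uIcc ht)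
    rw [sigWord_append_singleton, chain,
      intervalIntegral.integral_finsetSum fun j _ => hint j, MpWord_append_singleton, sigT_sum]
    refine Finset.sum_congr rfl fun j _ => ?_
    rw [sigT_appendLetter hD _ _ (Icc_subset_uIcc ht)]
    refine intervalIntegral.integral_congr fun r hr => ?_
    rw [sigT_shuffle hD _ _ (Icc_subset_uIcc (hsub hr)), kP, sigT_phi hX hX0 _ (hsub hr)]

end Transform

theorem signature_polynomial_transform_general (d m : ℕ) (L : ℝ)
    (X : ℝ → Fin d → ℝ) (hX : PiecewiseC1 X L) (hX0 : X 0 = 0)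
    (p : PolyMap d m) :
    ∀ x : Tens m, sigT (pPath p X) L x = sigT X L (Mp p x) := by
  intro x
  simp only [Mp, sigT_finsuppSum, sigT_smul, ← sigWord_pPath hX hX0 p _ ⟨hX.nonneg, le_rfl⟩]
  rfl

/-- For a piecewise continuously differentiable path `X : [0,L] → ℝ^d` with
`X(0) = 0` and a polynomial map `p` with `p(0) = 0`, one has
`⟨σ(p(X)), w⟩ = ⟨σ(X), M_p(w)⟩` for all `w ∈ T(ℝ^m)`, i.e. `σ(p(X)) = M_p^*(σ(X))`. -/
theorem signature_polynomial_transform (d m : ℕ) (L : ℝ)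
    (X : ℝ → Fin d → ℝ) (hX : PiecewiseC1 X L) (hX0 : X 0 = 0)
    (p : PolyMap d m) (hp : ∀ i, MvPolynomial.eval (0 : Fin d → ℝ) (p i) = 0) :
    ∀ x : Tens m, sigT (pPath p X) L x = sigT X L (Mp p x) :=
  signature_polynomial_transform_general d m L X hX hX0 p

end SigPaper
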